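/- arXiv:math/0610141 — 3 statements merged into one kernel-verified Lean document; each statement's English description precedes it below -/
import Mathlib

section
/- Let Γ be a nontrivial simple graph (a graph with at least one edge) on n vertices with adjacency matrix A and spectral radius λ. Let λ* > n - 1 ≥ λ and let f : ℝ → ℝ be given by a power series f(x) = ∑_{k=0}^∞ a_k x^k converging for |x| < λ*, with all coefficients a_k ≥ 0. Then for every vertex v_i, the functional centrality satisfies C_f(i) ≤ (1/n)[f(n-1) + (n-1) f(-1)]. -/
open Matrix BigOperators

/-- Entrywise monotonicity of matrix powers for nonnegative matrices. -/
lemma pow_entry_nonneg_le {n : ℕ} (A B : Matrix (Fin n) (Fin n) ℝ)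
    (hA : ∀ i j, 0 ≤ A i j) (hAB : ∀ i j, A i j ≤ B i j) :
    ∀ k i j, 0 ≤ (A ^ k) i j ∧ (A ^ k) i j ≤ (B ^ k) i j := by
  intro k
  induction k with
  | zero =>
    intro i j
    refine ⟨?_, by simp⟩
    simp only [pow_zero, Matrix.one_apply]
    split <;> norm_num
  | succ k ih =>
    intro i j
    rw [pow_succ, pow_succ, Matrix.mul_apply, Matrix.mul_apply]
    constructor
    · exact Finset.sum_nonneg fun l _ => mul_nonneg (ih i l).1 (hA l j)
    · refine Finset.sum_le_sum fun l _ => ?_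
      exact mul_le_mul (ih i l).2 (hAB l j) (hA l j) (le_trans (ih i l).1 (ih i l).2)

/-- Powers of `J - I`. -/
lemma JsubI_pow {n : ℕ} (hn : 1 ≤ n) (k : ℕ) :
    ((Matrix.of fun _ _ => (1 : ℝ)) - 1 : Matrix (Fin n) (Fin n) ℝ) ^ k
      = ((((n : ℝ) - 1) ^ k - (-1 : ℝ) ^ k) / n) • (Matrix.of fun _ _ => (1 : ℝ))
        + ((-1 : ℝ) ^ k) • 1 := by
  have hn0 : (n : ℝ) ≠ 0 := by positivity
  have hJJ : (Matrix.of fun _ _ => (1 : ℝ)) * (Matrix.of fun _ _ => (1 : ℝ))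
      = (n : ℝ) • (Matrix.of (fun _ _ => (1 : ℝ)) : Matrix (Fin n) (Fin n) ℝ) := by
    ext i j
    simp [Matrix.mul_apply]
  induction k with
  | zero => simp
  | succ k ih =>
    rw [pow_succ, ih]
    rw [add_mul, Matrix.smul_mul, Matrix.smul_mul, one_mul, Matrix.mul_sub,
      Matrix.mul_one, hJJ]
    ext i j
    simp only [Matrix.add_apply, Matrix.sub_apply, Matrix.smul_apply, Matrix.of_apply,
      Matrix.one_apply, smul_eq_mul]
    split <;> (field_simp; ring)

/-- For a nontrivial simple graph on `n` vertices (having at least one edge),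
if `f x = ∑ a k * x ^ k` converges for `|x| < lamStar` with `lamStar > n - 1`
(which exceeds the spectral radius) and all `a k ≥ 0`, then the functional
centrality `C_f(i) = ∑' k, a k * (A ^ k) i i` satisfies
`C_f(i) ≤ (1/n) * (f (n-1) + (n-1) * f (-1))`. -/
theorem functional_centrality_le {n : ℕ} (G : SimpleGraph (Fin n)) [DecidableRel G.Adj]
    (hG : G ≠ ⊥)
    (lamStar : ℝ) (hlamStar : (n : ℝ) - 1 < lamStar)
    (a : ℕ → ℝ) (ha : ∀ k, 0 ≤ a k) (f : ℝ → ℝ)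
    (hf : ∀ x : ℝ, |x| < lamStar → HasSum (fun k => a k * x ^ k) (f x))
    (i : Fin n) :
    ∑' k, a k * ((G.adjMatrix ℝ ^ k) i i) ≤
      (1 / n) * (f ((n : ℝ) - 1) + ((n : ℝ) - 1) * f (-1)) := by
  -- there is an edge, hence n ≥ 2
  obtain ⟨u, v, huv⟩ : ∃ u v, G.Adj u v := by
    by_contra h
    push_neg at h
    exact hG (by ext x y; simp [h x y])
  haveI : Nontrivial (Fin n) := ⟨u, v, G.ne_of_adj huv⟩
  have hn2 : 2 ≤ n := by
    have := Fintype.one_lt_card (α := Fin n)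
    simp at this; omega
  have hn1 : (1 : ℝ) ≤ (n : ℝ) - 1 := by
    have : (2 : ℝ) ≤ n := by exact_mod_cast hn2
    linarith
  have hn0 : (0 : ℝ) < n := by positivity
  set A := G.adjMatrix ℝ with hA
  set B : Matrix (Fin n) (Fin n) ℝ := (Matrix.of fun _ _ => (1 : ℝ)) - 1 with hB
  have hAnn : ∀ i j, 0 ≤ A i j := by
    intro i j; simp [hA, SimpleGraph.adjMatrix_apply]; split <;> norm_num
  have hABle : ∀ i j, A i j ≤ B i j := by
    intro i j
    simp only [hA, hB, SimpleGraph.adjMatrix_apply, Matrix.sub_apply, Matrix.of_apply,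
      Matrix.one_apply]
    by_cases hij : i = j
    · subst hij; simp
    · simp [hij]; split <;> norm_num
  have key := pow_entry_nonneg_le A B hAnn hABle
  -- diagonal of B^k
  have hBdiag : ∀ k, (B ^ k) i i
      = (((n : ℝ) - 1) ^ k + ((n : ℝ) - 1) * (-1 : ℝ) ^ k) / n := by
    intro k
    rw [hB, JsubI_pow (by omega) k]
    simp only [Matrix.add_apply, Matrix.smul_apply, Matrix.of_apply, Matrix.one_apply_eq,
      smul_eq_mul]
    field_simp
    ring
  -- sum of the bound
  have h1 : HasSum (fun k => a k * ((n : ℝ) - 1) ^ k) (f ((n : ℝ) - 1)) := by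
    apply hf
    rw [abs_of_nonneg (by linarith)]
    linarith
  have h2 : HasSum (fun k => a k * (-1 : ℝ) ^ k) (f (-1)) := by
    apply hf
    rw [abs_neg, abs_one]
    linarith
  have hsum : HasSum (fun k => a k * ((B ^ k) i i))
      ((1 / n) * (f ((n : ℝ) - 1) + ((n : ℝ) - 1) * f (-1))) := by
    have := (h1.mul_left (1 / (n : ℝ))).add (h2.mul_left (((n : ℝ) - 1) / n))
    convert this using 1
    · rfl
    · funext k
      rw [hBdiag k]
      field_simp
    · field_simp
  have hle : ∀ k, a k * ((A ^ k) i i) ≤ a k * ((B ^ k) i i) := fun k =>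
    mul_le_mul_of_nonneg_left (key k i i).2 (ha k)
  have hnonneg : ∀ k, 0 ≤ a k * ((A ^ k) i i) := fun k =>
    mul_nonneg (ha k) (key k i i).1
  calc ∑' k, a k * ((A ^ k) i i) ≤ ∑' k, a k * ((B ^ k) i i) :=
        Summable.tsum_le_tsum hle (Summable.of_nonneg_of_le hnonneg hle hsum.summable) hsum.summable
    _ = (1 / n) * (f ((n : ℝ) - 1) + ((n : ℝ) - 1) * f (-1)) := hsum.tsum_eq
end

section
/- Let Γ be a simple graph on n ≥ 1 vertices with at least one vertex, adjacency matrix A, and eigenvalues λ₁,…,λₙ. Define the bipartivity measure β(Γ) = (∑_{i=1}^n cosh(λᵢ)) / (∑_{i=1}^n e^{λᵢ}). Then 1/2 < β(Γ) ≤ 1. -/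
open Matrix BigOperators

section Aux

attribute [local instance] Matrix.linftyOpNormedAddCommGroup Matrix.linftyOpNormedRing
  Matrix.linftyOpNormedAlgebra

/-- The trace as a continuous linear map. -/
noncomputable def trCLM (n : ℕ) : Matrix (Fin n) (Fin n) ℝ →L[ℝ] ℝ :=
  LinearMap.toContinuousLinearMap (Matrix.traceLinearMap (Fin n) ℝ ℝ)

lemma trCLM_apply {n : ℕ} (X : Matrix (Fin n) (Fin n) ℝ) : trCLM n X = X.trace := rfl

/-- The trace of the exponential of a conjugated diagonal matrix. -/
lemma trace_exp_conj_diag {n : ℕ} (U : Matrix (Fin n) (Fin n) ℝ)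
    (v : Fin n → ℝ) (hU : Uᵀ * U = 1) :
    Matrix.trace (NormedSpace.exp (U * Matrix.diagonal v * Uᵀ)) = ∑ i, Real.exp (v i) := by
  have : Invertible U := invertibleOfLeftInverse _ _ hU
  have hAU : IsUnit U := isUnit_of_invertible U
  have hUinv : U⁻¹ = Uᵀ := Matrix.inv_eq_left_inv hU
  rw [← hUinv, Matrix.exp_conj U _ hAU, Matrix.trace_mul_cycle, hUinv, hU, Matrix.one_mul,
    Matrix.exp_diagonal, Matrix.trace_diagonal]
  exact Finset.sum_congr rfl fun i _ => by rw [Pi.coe_exp, Real.exp_eq_exp_ℝ]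

/-- Key inequality: if all entries of `A` are nonnegative and `A` is orthogonally
diagonalized with eigenvalues `lam`, then `∑ exp (-lam i) ≤ ∑ exp (lam i)`. -/
lemma sum_exp_neg_le_sum_exp {n : ℕ} (A U : Matrix (Fin n) (Fin n) ℝ) (lam : Fin n → ℝ)
    (hApos : ∀ i j, 0 ≤ A i j)
    (hU : Uᵀ * U = 1)
    (hdiag : A = U * Matrix.diagonal lam * Uᵀ) :
    ∑ i, Real.exp (-lam i) ≤ ∑ i, Real.exp (lam i) := by
  -- entries of powers of A are nonnegative, hence traces of powers are nonnegative
  have hpow : ∀ k : ℕ, ∀ i j, 0 ≤ (A ^ k) i j := by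
    intro k
    induction k with
    | zero => intro i j; simp only [pow_zero, Matrix.one_apply]; positivity
    | succ k ih =>
      intro i j
      rw [pow_succ, Matrix.mul_apply]
      exact Finset.sum_nonneg fun l _ => mul_nonneg (ih i l) (hApos l j)
  have htr : ∀ k : ℕ, 0 ≤ (A ^ k).trace := fun k =>
    Finset.sum_nonneg fun i _ => hpow k i i
  -- the two exponential series
  have h1 : HasSum (fun k : ℕ => ((k.factorial : ℝ)⁻¹) • A ^ k) (NormedSpace.exp A) :=
    NormedSpace.exp_series_hasSum_exp' A
  have h2 : HasSum (fun k : ℕ => ((k.factorial : ℝ)⁻¹) • (-A) ^ k) (NormedSpace.exp (-A)) :=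
    NormedSpace.exp_series_hasSum_exp' (-A)
  have h1' := (trCLM n).hasSum h1
  have h2' := (trCLM n).hasSum h2
  simp only [_root_.map_smul, trCLM_apply, Matrix.trace_smul] at h1' h2'
  -- compare term by term
  have hle : ∀ k : ℕ, ((k.factorial : ℝ)⁻¹) • ((-A) ^ k).trace
      ≤ ((k.factorial : ℝ)⁻¹) • (A ^ k).trace := by
    intro k
    have hAneg : (-A) ^ k = ((-1 : ℝ) ^ k) • A ^ k := by
      rw [show -A = (-1 : ℝ) • A by simp, smul_pow]
    have hsign : ((-1 : ℝ)) ^ k ≤ 1 := by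
      rcases Nat.even_or_odd k with h | h
      · rw [h.neg_one_pow]
      · rw [h.neg_one_pow]; norm_num
    rw [hAneg, Matrix.trace_smul]
    simp only [smul_eq_mul]
    have : (-1 : ℝ) ^ k * (A ^ k).trace ≤ (A ^ k).trace := by
      nlinarith [htr k]
    have hfac : (0 : ℝ) ≤ (k.factorial : ℝ)⁻¹ := by positivity
    nlinarith
  have := hasSum_le hle h2' h1'
  -- identify the two traces
  have hT : Matrix.trace (NormedSpace.exp (-A)) = ∑ i, Real.exp (-lam i) := by
    have : -A = U * Matrix.diagonal (fun i => -lam i) * Uᵀ := by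
      rw [hdiag, show Matrix.diagonal (fun i => -lam i) = -Matrix.diagonal lam by
        ext i j; by_cases h : i = j <;> simp [h], Matrix.mul_neg, Matrix.neg_mul]
    rw [this, trace_exp_conj_diag U _ hU]
  have hS : Matrix.trace (NormedSpace.exp A) = ∑ i, Real.exp (lam i) := by
    rw [hdiag, trace_exp_conj_diag U _ hU]
  rwa [hT, hS] at this

end Aux

/-- **Bounds for the bipartivity measure.** For a simple graph on `n ≥ 1`
vertices whose adjacency matrix has eigenvalues `lam 1, …, lam n` (given via an
orthogonal diagonalization `A = U * diagonal lam * Uᵀ`), the bipartivity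
measure `β(Γ) = (∑ i, cosh (lam i)) / (∑ i, exp (lam i))` satisfies
`1/2 < β(Γ) ≤ 1`. -/
theorem bipartivity_bounds {n : ℕ} (hn : 1 ≤ n)
    (G : SimpleGraph (Fin n)) [DecidableRel G.Adj]
    (A U : Matrix (Fin n) (Fin n) ℝ) (lam : Fin n → ℝ)
    (hA : A = G.adjMatrix ℝ)
    (hU : Uᵀ * U = 1)
    (hdiag : A = U * Matrix.diagonal lam * Uᵀ) :
    1 / 2 < (∑ i, Real.cosh (lam i)) / (∑ i, Real.exp (lam i)) ∧
      (∑ i, Real.cosh (lam i)) / (∑ i, Real.exp (lam i)) ≤ 1 := by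
  have hApos : ∀ i j, 0 ≤ A i j := by
    intro i j
    rw [hA, SimpleGraph.adjMatrix_apply]
    split <;> norm_num
  have key : ∑ i, Real.exp (-lam i) ≤ ∑ i, Real.exp (lam i) :=
    sum_exp_neg_le_sum_exp A U lam hApos hU hdiag
  haveI : Nonempty (Fin n) := ⟨⟨0, hn⟩⟩
  have hSpos : 0 < ∑ i, Real.exp (lam i) :=
    Finset.sum_pos (fun i _ => Real.exp_pos _) Finset.univ_nonempty
  have hTpos : 0 < ∑ i, Real.exp (-lam i) :=
    Finset.sum_pos (fun i _ => Real.exp_pos _) Finset.univ_nonempty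
  have hcosh : ∑ i, Real.cosh (lam i)
      = ((∑ i, Real.exp (lam i)) + ∑ i, Real.exp (-lam i)) / 2 := by
    rw [← Finset.sum_add_distrib, Finset.sum_div]
    exact Finset.sum_congr rfl fun i _ => Real.cosh_eq (lam i)
  constructor
  · rw [hcosh, lt_div_iff₀ hSpos]
    linarith
  · rw [hcosh, div_le_one hSpos]
    linarith
end

section
/- Let Γ be a simple graph on n ≥ 1 vertices with adjacency matrix A and eigenvalues λ₁,…,λₙ, and let β(Γ) = (∑_{i=1}^n cosh(λᵢ)) / (∑_{i=1}^n e^{λᵢ}). Then β(Γ) = 1 if and only if Γ is bipartite. -/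
open Matrix BigOperators Nat

lemma hasSum_sinh_aux (x : ℝ) :
    HasSum (fun k : ℕ => if Odd k then x ^ k / k ! else 0) (Real.sinh x) := by
  have h1 := NormedSpace.expSeries_div_hasSum_exp x
  have h2 := NormedSpace.expSeries_div_hasSum_exp (-x)
  rw [← Real.exp_eq_exp_ℝ] at h1 h2
  have h := (h1.sub h2).div_const 2
  rw [← Real.sinh_eq] at h
  convert h using 2 with k
  · rfl
  rcases Nat.even_or_odd k with he | ho
  · simp [Nat.not_even_iff_odd, Nat.not_odd_iff_even.mpr he, he.neg_pow]
  · simp [ho, ho.neg_pow]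
    ring

lemma fin2_ne_iff (a b c : Fin 2) (h : a ≠ b) : a = c ↔ ¬ b = c := by
  revert a b c; decide

lemma coloring_walk_even {n : ℕ} {G : SimpleGraph (Fin n)} (C : G.Coloring (Fin 2))
    {u v : Fin n} (p : G.Walk u v) : C u = C v ↔ Even p.length := by
  induction p with
  | nil => simp
  | cons h q ih =>
    rw [SimpleGraph.Walk.length_cons, Nat.even_add_one, ← ih,
      fin2_ne_iff _ _ _ (C.valid h)]

/-- **Bipartivity criterion.** For a simple graph `G` on `n ≥ 1` vertices whose
adjacency matrix has eigenvalues `lam 1, …, lam n` (given via an orthogonal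
diagonalization `A = U * diagonal lam * Uᵀ`), the bipartivity measure
`β(Γ) = (∑ i, cosh (lam i)) / (∑ i, exp (lam i))` equals `1` if and only if `G`
is bipartite (i.e. `2`-colorable). -/
theorem bipartivity_eq_one_iff {n : ℕ} (hn : 1 ≤ n)
    (G : SimpleGraph (Fin n)) [DecidableRel G.Adj]
    (A U : Matrix (Fin n) (Fin n) ℝ) (lam : Fin n → ℝ)
    (hA : A = G.adjMatrix ℝ)
    (hU : Uᵀ * U = 1)
    (hdiag : A = U * Matrix.diagonal lam * Uᵀ) :
    (∑ i, Real.cosh (lam i)) / (∑ i, Real.exp (lam i)) = 1 ↔ G.Colorable 2 := by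
  classical
  have : Nonempty (Fin n) := ⟨⟨0, hn⟩⟩
  have hUU : U * Uᵀ = 1 := mul_eq_one_comm.mp hU
  -- powers of A
  have hApow : ∀ m : ℕ, A ^ m = U * Matrix.diagonal (fun i => lam i ^ m) * Uᵀ := by
    intro m
    induction m with
    | zero => simp [hUU]
    | succ m ih =>
      rw [pow_succ, ih, hdiag]
      simp only [Matrix.mul_assoc]
      rw [← Matrix.mul_assoc Uᵀ U, hU, Matrix.one_mul,
        ← Matrix.mul_assoc (Matrix.diagonal fun i => lam i ^ m) (Matrix.diagonal lam),
        Matrix.diagonal_mul_diagonal]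
      congr 2 with i
      try rw [← pow_succ]
  -- traces as power sums
  have htr : ∀ m : ℕ, ∑ i, lam i ^ m = (A ^ m).trace := by
    intro m
    rw [hApow m, Matrix.trace_mul_cycle, hU, Matrix.one_mul, Matrix.trace_diagonal]
  -- traces as walk counts
  have hwalk : ∀ m : ℕ, ∑ i, lam i ^ m
      = ∑ v : Fin n, (Fintype.card {p : G.Walk v v // p.length = m} : ℝ) := by
    intro m
    rw [htr m, Matrix.trace]
    refine Finset.sum_congr rfl fun v _ => ?_
    rw [Matrix.diag_apply, hA, SimpleGraph.adjMatrix_pow_apply_eq_card_walk]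
    norm_cast
  -- sinh sum
  set S := ∑ i, Real.sinh (lam i) with hS
  have hgsum : HasSum (fun k : ℕ => if Odd k then (∑ i, lam i ^ k) / k ! else 0) S := by
    have h := hasSum_sum (s := (Finset.univ : Finset (Fin n)))
      (f := fun i (k : ℕ) => if Odd k then lam i ^ k / k ! else 0)
      (a := fun i => Real.sinh (lam i)) (fun i _ => hasSum_sinh_aux (lam i))
    convert h using 2 with k
    rw [Finset.sum_ite_irrel, Finset.sum_const_zero, Finset.sum_div]
  have hterm_nonneg : ∀ k : ℕ, 0 ≤ (if Odd k then (∑ i, lam i ^ k) / k ! else 0) := by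
    intro k
    split
    · apply div_nonneg _ (by positivity)
      rw [hwalk k]
      exact Finset.sum_nonneg fun v _ => by positivity
    · exact le_refl _
  -- step 1 : value equals one iff S = 0
  have hE : (∑ i, Real.exp (lam i)) = (∑ i, Real.cosh (lam i)) + S := by
    rw [hS, ← Finset.sum_add_distrib]
    exact Finset.sum_congr rfl fun i _ => (Real.cosh_add_sinh (lam i)).symm
  have hC : 0 < ∑ i, Real.cosh (lam i) :=
    Finset.sum_pos (fun i _ => lt_of_lt_of_le one_pos (Real.one_le_cosh _))
      Finset.univ_nonempty
  have hSnn : 0 ≤ S := hgsum.nonneg hterm_nonneg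
  have key1 : (∑ i, Real.cosh (lam i)) / (∑ i, Real.exp (lam i)) = 1 ↔ S = 0 := by
    constructor
    · intro h
      have hEpos : 0 < ∑ i, Real.exp (lam i) := by rw [hE]; linarith
      have h2 := (div_eq_one_iff_eq hEpos.ne').mp h
      linarith
    · intro h
      rw [hE, h, add_zero, div_self hC.ne']
  -- step 2 : S = 0 iff no odd closed walks
  have key2 : S = 0 ↔ ∀ (v : Fin n) (p : G.Walk v v), ¬ Odd p.length := by
    constructor
    · intro h0 v p hodd
      have hk := le_hasSum hgsum p.length (fun j _ => hterm_nonneg j)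
      rw [h0] at hk
      rw [if_pos hodd] at hk
      have hnn := hterm_nonneg p.length
      rw [if_pos hodd] at hnn
      have hz0 : (∑ i, lam i ^ p.length) / (p.length)! = 0 := le_antisymm hk hnn
      have hz : (∑ i, lam i ^ p.length) = 0 := by
        have hfac : ((p.length)! : ℝ) ≠ 0 := Nat.cast_ne_zero.mpr (Nat.factorial_ne_zero _)
        field_simp at hz0
        simpa using hz0
      rw [hwalk] at hz
      have hcard : (Fintype.card {q : G.Walk v v // q.length = p.length} : ℝ) = 0 :=
        (Finset.sum_eq_zero_iff_of_nonneg (fun w _ => by positivity)).mp hz v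
          (Finset.mem_univ v)
      have hcard' : Fintype.card {q : G.Walk v v // q.length = p.length} = 0 := by
        exact_mod_cast hcard
      exact (Fintype.card_eq_zero_iff.mp hcard').elim ⟨p, rfl⟩
    · intro h
      have hall : ∀ k : ℕ, (if Odd k then (∑ i, lam i ^ k) / k ! else 0) = 0 := by
        intro k
        split
        · next hk =>
          rw [hwalk k]
          have hz : ∀ v : Fin n, Fintype.card {q : G.Walk v v // q.length = k} = 0 := by
            intro v
            rw [Fintype.card_eq_zero_iff]
            refine ⟨fun q => h v q.1 ?_⟩
            rw [q.2]
            exact hk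
          simp [hz]
        · rfl
      have hg0 : HasSum (fun k : ℕ => if Odd k then (∑ i, lam i ^ k) / k ! else 0) 0 := by
        simp only [hall]
        exact hasSum_zero
      exact hgsum.unique hg0
  -- step 3 : no odd closed walks iff 2-colorable
  have key3 : (∀ (v : Fin n) (p : G.Walk v v), ¬ Odd p.length) ↔ G.Colorable 2 := by
    constructor
    · intro h
      refine ⟨SimpleGraph.Coloring.mk
        (fun v => if Even (G.dist (G.connectedComponentMk v).out v) then 0 else 1) ?_⟩
      intro u v hadj hc
      have hcomp : G.connectedComponentMk u = G.connectedComponentMk v :=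
        SimpleGraph.ConnectedComponent.sound hadj.reachable
      rw [← hcomp] at hc
      have hru : G.Reachable (G.connectedComponentMk u).out u :=
        SimpleGraph.ConnectedComponent.eq.mp (G.connectedComponentMk u).out_eq
      have hrv : G.Reachable (G.connectedComponentMk u).out v := hru.trans hadj.reachable
      have hpar : Even (G.dist (G.connectedComponentMk u).out u)
          ↔ Even (G.dist (G.connectedComponentMk u).out v) := by
        constructor
        · intro h1
          by_contra h2
          rw [if_pos h1, if_neg h2] at hc
          simp at hc
        · intro h2
          by_contra h1
          rw [if_neg h1, if_pos h2] at hc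
          simp at hc
      obtain ⟨p, hp⟩ := hru.exists_walk_length_eq_dist
      obtain ⟨q, hq⟩ := hrv.exists_walk_length_eq_dist
      apply h _ (p.append (SimpleGraph.Walk.cons hadj q.reverse))
      rw [SimpleGraph.Walk.length_append, SimpleGraph.Walk.length_cons,
        SimpleGraph.Walk.length_reverse, hp, hq]
      rcases Nat.even_or_odd (G.dist (G.connectedComponentMk u).out u) with he | ho
      · obtain ⟨b, hb⟩ := hpar.mp he
        obtain ⟨a, ha⟩ := he
        exact ⟨a + b, by omega⟩
      · have ho2 : Odd (G.dist (G.connectedComponentMk u).out v) := by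
          rw [← Nat.not_even_iff_odd] at ho ⊢
          exact fun hev => ho (hpar.mpr hev)
        obtain ⟨a, ha⟩ := ho
        obtain ⟨b, hb⟩ := ho2
        exact ⟨a + b + 1, by omega⟩
    · rintro ⟨C⟩ v p hodd
      exact (Nat.not_odd_iff_even.mpr ((coloring_walk_even C p).mp rfl)) hodd
  exact key1.trans (key2.trans key3)
end
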